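/- Suppose there exists a representation x_t of finite complexity (I(x_t;y^t) < ∞ for all t) whose posterior separates z_t from y^t. Then as β → 0⁺, any minimizer of the IB Lagrangian L_β = (1/T) Σ_t H_{p,q}(z_t|y^t) + β I(x_t;y^t) has IB value converging to the minimum of the unregularized cross-entropy loss, and any minimizer of L_β in the limit β → 0 is a separating representation. -/

import Mathlib

set_option autoImplicit false

open scoped BigOperators

/-- A (stochastic) representation of the past data: a posterior kernel
`qx t : y^t ↦ q(x_t|y^t)` together with a readout kernel `qz t : x_t ↦ q(z_t|x_t)`. -/
structure IBRep (T : ℕ) (H X Z : Type) [Fintype H] [Fintype X] [Fintype Z] where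
  qx : Fin T → H → X → ℝ
  qz : Fin T → X → Z → ℝ
  qx_nn : ∀ t h x, 0 ≤ qx t h x
  qx_sum : ∀ t h, ∑ x, qx t h x = 1
  qz_pos : ∀ t x z, 0 < qz t x z
  qz_sum : ∀ t x, ∑ z, qz t x z = 1

variable {T : ℕ} {H X Z : Type} [Fintype H] [Fintype X] [Fintype Z]

/-- Cross-entropy loss `L' = (1/T) ∑_t H_{p,q}(z_t|y^t)`. -/
noncomputable def CE (T : ℕ) (p : Fin T → H → Z → ℝ) (r : IBRep T H X Z) : ℝ :=
  (1 / (T : ℝ)) * ∑ t, ∑ h, ∑ z,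
    p t h z * (-Real.log (∑ x, r.qz t x z * r.qx t h x))

/-- Complexity `(1/T) ∑_t I(x_t; y^t)` of the representation. -/
noncomputable def Cx (T : ℕ) (p : Fin T → H → Z → ℝ) (r : IBRep T H X Z) : ℝ :=
  (1 / (T : ℝ)) * ∑ t, ∑ h, ∑ x,
    ((∑ z, p t h z) * r.qx t h x) *
      Real.log (((∑ z, p t h z) * r.qx t h x) /
        ((∑ z, p t h z) * (∑ h', (∑ z, p t h' z) * r.qx t h' x)))

/-- The posterior of `x_t` separates `z_t` from the past data `y^t`. -/
def Separating (T : ℕ) (p : Fin T → H → Z → ℝ) (r : IBRep T H X Z) : Prop :=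
  ∀ t h z, p t h z / (∑ z', p t h z') = ∑ x, r.qz t x z * r.qx t h x

/-!
The excess cross-entropy of any representation over a separating one `r₀` is a sum of
Kullback–Leibler divergences `KL(p(·|y^t) ‖ q(·|y^t))`, nonnegative by Gibbs' inequality and zero
only when `q(z_t|y^t) = p(z_t|y^t)`. So `r₀` minimizes the cross-entropy and every minimizer
separates. Since mutual information is nonnegative, for `β > 0` the infimum of `L_β` lies between
`CE(r₀)` and `CE(r₀) + β I(r₀)`.
-/

open Filter Topology Real InformationTheory

section Gibbs

variable {ι : Type*} [Fintype ι]

lemma mul_klFun_div (w : ℝ) {v : ℝ} (hv : v ≠ 0) :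
    v * klFun (w / v) = w * log (w / v) + v - w := by
  rw [klFun_apply]
  field_simp

lemma sub_le_mul_log_div {w v : ℝ} (hw : 0 ≤ w) (hv : 0 ≤ v) (hv₀ : v = 0 → w = 0) :
    w - v ≤ w * log (w / v) := by
  rcases hv.eq_or_lt with rfl | hv
  · simp [hv₀ rfl]
  · have := mul_nonneg hv.le (klFun_nonneg (div_nonneg hw hv.le))
    rw [mul_klFun_div w hv.ne'] at this
    linarith

theorem sum_mul_log_div_nonneg (w v : ι → ℝ) (hw : ∀ i, 0 ≤ w i) (hv : ∀ i, 0 ≤ v i)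
    (hv₀ : ∀ i, v i = 0 → w i = 0) (hsum : ∑ i, w i = ∑ i, v i) :
    0 ≤ ∑ i, w i * log (w i / v i) := by
  have := Finset.sum_le_sum fun i (_ : i ∈ Finset.univ) => sub_le_mul_log_div (hw i) (hv i) (hv₀ i)
  rwa [Finset.sum_sub_distrib, hsum, sub_self] at this

theorem eq_of_sum_mul_log_div_nonpos (w v : ι → ℝ) (hw : ∀ i, 0 ≤ w i) (hv : ∀ i, 0 < v i)
    (hsum : ∑ i, w i = ∑ i, v i) (hle : ∑ i, w i * log (w i / v i) ≤ 0) : ∀ i, w i = v i := by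
  have hkl_nonneg : ∀ i ∈ Finset.univ, 0 ≤ v i * klFun (w i / v i) := fun i _ =>
    mul_nonneg (hv i).le (klFun_nonneg (div_nonneg (hw i) (hv i).le))
  have hkl_sum : ∑ i, v i * klFun (w i / v i) = 0 := by
    refine le_antisymm ?_ (Finset.sum_nonneg hkl_nonneg)
    simp only [mul_klFun_div _ (hv _).ne', Finset.sum_sub_distrib, Finset.sum_add_distrib, hsum]
    linarith
  intro i
  have hkl := (Finset.sum_eq_zero_iff_of_nonneg hkl_nonneg).1 hkl_sum i (Finset.mem_univ i)
  rw [mul_eq_zero, klFun_eq_zero_iff (div_nonneg (hw i) (hv i).le), div_eq_one_iff_eq (hv i).ne']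
    at hkl
  exact hkl.resolve_left (hv i).ne'

lemma sum_mul_neg_log_sub_sum_mul_neg_log_div_sum (P Q : ι → ℝ) (hP : ∀ i, 0 < P i)
    (hQ : ∀ i, 0 < Q i) :
    ∑ i, P i * -log (Q i) - ∑ i, P i * -log (P i / ∑ j, P j) =
      ∑ i, P i * log (P i / ((∑ j, P j) * Q i)) := by
  rw [← Finset.sum_sub_distrib]
  refine Finset.sum_congr rfl fun i _ => ?_
  have hS : 0 < ∑ j, P j := (hP i).trans_le <|
    Finset.single_le_sum (fun j _ => (hP j).le) (Finset.mem_univ i)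
  rw [← div_div, log_div (div_pos (hP i) hS).ne' (hQ i).ne']
  ring

theorem sum_mul_neg_log_div_sum_le (P Q : ι → ℝ) (hP : ∀ i, 0 < P i) (hQ : ∀ i, 0 < Q i)
    (hQ₁ : ∑ i, Q i = 1) :
    ∑ i, P i * -log (P i / ∑ j, P j) ≤ ∑ i, P i * -log (Q i) := by
  rw [← sub_nonneg, sum_mul_neg_log_sub_sum_mul_neg_log_div_sum P Q hP hQ]
  refine sum_mul_log_div_nonneg _ _ (fun i => (hP i).le)
    (fun i => mul_nonneg (Finset.sum_nonneg fun j _ => (hP j).le) (hQ i).le)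
    (fun i h => ?_) (by rw [← Finset.mul_sum, hQ₁, mul_one])
  rcases mul_eq_zero.1 h with h | h
  · exact absurd h (Finset.sum_pos (fun j _ => hP j) ⟨i, Finset.mem_univ i⟩).ne'
  · exact absurd h (hQ i).ne'

theorem div_sum_eq_of_sum_mul_neg_log_le (P Q : ι → ℝ) (hP : ∀ i, 0 < P i) (hQ : ∀ i, 0 < Q i)
    (hQ₁ : ∑ i, Q i = 1) (hle : ∑ i, P i * -log (Q i) ≤ ∑ i, P i * -log (P i / ∑ j, P j)) :
    ∀ i, P i / ∑ j, P j = Q i := by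
  intro i
  have hS : 0 < ∑ j, P j := Finset.sum_pos (fun j _ => hP j) ⟨i, Finset.mem_univ i⟩
  have hkl := eq_of_sum_mul_log_div_nonpos P (fun j => (∑ j, P j) * Q j) (fun j => (hP j).le)
    (fun j => mul_pos hS (hQ j)) (by rw [← Finset.mul_sum, hQ₁, mul_one])
    (by rw [← sum_mul_neg_log_sub_sum_mul_neg_log_div_sum P Q hP hQ]; linarith) i
  rw [hkl, mul_div_cancel_left₀ _ hS.ne']

end Gibbs

section MutualInfo

variable {α β : Type*} [Fintype α] [Fintype β]

/-- Mutual information of `(a, b)` when `a` has law `ν` and `b` is drawn through the channel `κ`. -/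
noncomputable def mutualInfo (ν : α → ℝ) (κ : α → β → ℝ) : ℝ :=
  ∑ a, ∑ b, (ν a * κ a b) * log ((ν a * κ a b) / (ν a * ∑ a', ν a' * κ a' b))

theorem mutualInfo_nonneg (ν : α → ℝ) (κ : α → β → ℝ) (hν : ∀ a, 0 ≤ ν a)
    (hν₁ : ∑ a, ν a = 1) (hκ : ∀ a b, 0 ≤ κ a b) (hκ₁ : ∀ a, ∑ b, κ a b = 1) :
    0 ≤ mutualInfo ν κ := by
  have hjoint : ∑ a, ∑ b, ν a * κ a b = 1 := by
    simp only [← Finset.mul_sum, hκ₁, mul_one, hν₁]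
  have hmarginal : ∑ b, ∑ a', ν a' * κ a' b = 1 := by rw [Finset.sum_comm, hjoint]
  rw [mutualInfo, ← Fintype.sum_prod_type']
  refine sum_mul_log_div_nonneg (fun ab : α × β => ν ab.1 * κ ab.1 ab.2)
    (fun ab => ν ab.1 * ∑ a', ν a' * κ a' ab.2) (fun ab => mul_nonneg (hν _) (hκ _ _))
    (fun ab => mul_nonneg (hν _) (Finset.sum_nonneg fun a' _ => mul_nonneg (hν a') (hκ a' _)))
    (fun ⟨a, b⟩ h => ?_) ?_
  · rcases mul_eq_zero.1 h with h | h
    · simp [h]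
    · exact (Finset.sum_eq_zero_iff_of_nonneg fun a' _ => mul_nonneg (hν a') (hκ a' b)).1 h a
        (Finset.mem_univ a)
  · rw [Fintype.sum_prod_type, Fintype.sum_prod_type, hjoint]
    simp only [← Finset.mul_sum, hmarginal, mul_one, hν₁]

end MutualInfo

theorem tendsto_ciInf_add_mul_nhdsGT_zero {ι : Type*} (f g : ι → ℝ) (i₀ : ι)
    (hf : ∀ i, f i₀ ≤ f i) (hg : ∀ i, 0 ≤ g i) :
    Tendsto (fun β : ℝ => ⨅ i, f i + β * g i) (𝓝[>] 0) (𝓝 (⨅ i, f i)) := by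
  have : Nonempty ι := ⟨i₀⟩
  have hinf : ⨅ i, f i = f i₀ :=
    le_antisymm (ciInf_le ⟨f i₀, by rintro _ ⟨i, rfl⟩; exact hf i⟩ i₀) (le_ciInf hf)
  have hlower : ∀ β : ℝ, 0 < β → ∀ i, f i₀ ≤ f i + β * g i := fun β hβ i =>
    (hf i).trans (le_add_of_nonneg_right (mul_nonneg hβ.le (hg i)))
  have hupper : Tendsto (fun β : ℝ => f i₀ + β * g i₀) (𝓝[>] 0) (𝓝 (f i₀)) :=
    tendsto_nhdsWithin_of_tendsto_nhds <| by
      simpa using tendsto_const_nhds.add ((tendsto_id (x := 𝓝 (0 : ℝ))).mul_const (g i₀))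
  rw [hinf]
  refine tendsto_of_tendsto_of_tendsto_of_le_of_le' tendsto_const_nhds hupper ?_ ?_
  · filter_upwards [self_mem_nhdsWithin] with β hβ using le_ciInf (hlower β hβ)
  · filter_upwards [self_mem_nhdsWithin] with β hβ
    exact ciInf_le ⟨f i₀, by rintro _ ⟨i, rfl⟩; exact hlower β hβ i⟩ i₀

namespace IBRep

/-- The predictive law `q(z_t|y^t) = ∑ₓ q(z_t|x) q(x|y^t)`. -/
def predictive (r : IBRep T H X Z) (t : Fin T) (h : H) (z : Z) : ℝ :=
  ∑ x, r.qz t x z * r.qx t h x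

lemma predictive_pos (r : IBRep T H X Z) (t : Fin T) (h : H) (z : Z) :
    0 < r.predictive t h z := by
  obtain ⟨x, hx⟩ : ∃ x, 0 < r.qx t h x := by
    by_contra! hle
    have := Finset.sum_eq_zero fun x (_ : x ∈ Finset.univ) => (hle x).antisymm (r.qx_nn t h x)
    rw [r.qx_sum] at this
    exact one_ne_zero this
  exact Finset.sum_pos' (fun x _ => mul_nonneg (r.qz_pos t x z).le (r.qx_nn t h x))
    ⟨x, Finset.mem_univ x, mul_pos (r.qz_pos t x z) hx⟩

lemma sum_predictive (r : IBRep T H X Z) (t : Fin T) (h : H) :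
    ∑ z, r.predictive t h z = 1 := by
  simp only [predictive]
  rw [Finset.sum_comm]
  simp only [← Finset.sum_mul, r.qz_sum, one_mul, r.qx_sum]

variable {p : Fin T → H → Z → ℝ}

lemma sum_mul_neg_log_predictive_le_of_separating (hp_pos : ∀ t h z, 0 < p t h z)
    {r₀ : IBRep T H X Z} (hsep : Separating T p r₀) (r : IBRep T H X Z) (t : Fin T) (h : H) :
    ∑ z, p t h z * -log (r₀.predictive t h z) ≤ ∑ z, p t h z * -log (r.predictive t h z) := by
  simp only [predictive, ← hsep t h]
  exact sum_mul_neg_log_div_sum_le _ _ (hp_pos t h) (r.predictive_pos t h) (r.sum_predictive t h)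

theorem CE_le_CE_of_separating (hp_pos : ∀ t h z, 0 < p t h z) {r₀ : IBRep T H X Z}
    (hsep : Separating T p r₀) (r : IBRep T H X Z) : CE T p r₀ ≤ CE T p r :=
  mul_le_mul_of_nonneg_left (Finset.sum_le_sum fun t _ => Finset.sum_le_sum fun h _ =>
    sum_mul_neg_log_predictive_le_of_separating hp_pos hsep r t h) (by positivity)

theorem separating_of_CE_le_CE (hp_pos : ∀ t h z, 0 < p t h z) {r₀ : IBRep T H X Z}
    (hsep : Separating T p r₀) (r : IBRep T H X Z) (hle : CE T p r ≤ CE T p r₀) :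
    Separating T p r := by
  intro t h
  have hT : (0 : ℝ) < 1 / T := one_div_pos.2 (Nat.cast_pos.2 t.pos)
  have hmono := sum_mul_neg_log_predictive_le_of_separating hp_pos hsep r
  have htotal := (Finset.sum_eq_sum_iff_of_le fun t _ => Finset.sum_le_sum fun h _ =>
    hmono t h).1 ((CE_le_CE_of_separating hp_pos hsep r).antisymm hle |> mul_left_cancel₀ hT.ne')
  have hth := (Finset.sum_eq_sum_iff_of_le fun h _ => hmono t h).1
    (htotal t (Finset.mem_univ t)) h (Finset.mem_univ h)
  refine div_sum_eq_of_sum_mul_neg_log_le _ _ (hp_pos t h) (r.predictive_pos t h)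
    (r.sum_predictive t h) ?_
  simp only [predictive, ← hsep t h] at hth
  exact hth.ge

theorem Cx_nonneg (hp_nonneg : ∀ t h z, 0 ≤ p t h z) (hp_sum : ∀ t, ∑ h, ∑ z, p t h z = 1)
    (r : IBRep T H X Z) : 0 ≤ Cx T p r :=
  mul_nonneg (by positivity) <| Finset.sum_nonneg fun t _ =>
    mutualInfo_nonneg (fun h => ∑ z, p t h z) (r.qx t)
      (fun h => Finset.sum_nonneg fun z _ => hp_nonneg t h z) (hp_sum t) (r.qx_nn t) (r.qx_sum t)

end IBRep

theorem stmt_12_general (T : ℕ)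
    (p : Fin T → H → Z → ℝ)
    (hp_pos : ∀ t h z, 0 < p t h z) (hp_sum : ∀ t, ∑ h, ∑ z, p t h z = 1)
    (r₀ : IBRep T H X Z) (hsep : Separating T p r₀) :
    Filter.Tendsto (fun β : ℝ => ⨅ r : IBRep T H X Z, (CE T p r + β * Cx T p r))
        (nhdsWithin 0 (Set.Ioi 0)) (nhds (⨅ r : IBRep T H X Z, CE T p r)) ∧
      ∀ r : IBRep T H X Z, (∀ r' : IBRep T H X Z, CE T p r ≤ CE T p r') →
        Separating T p r :=
  ⟨tendsto_ciInf_add_mul_nhdsGT_zero _ _ r₀ (IBRep.CE_le_CE_of_separating hp_pos hsep)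
      (IBRep.Cx_nonneg (fun t h z => (hp_pos t h z).le) hp_sum),
    fun r hr => IBRep.separating_of_CE_le_CE hp_pos hsep r (hr r₀)⟩

/-- If there is a separating representation of finite complexity,
then as `β → 0⁺` the infimum of the IB Lagrangian `L_β = CE + β·Cx` converges to
the minimum of the unregularized cross-entropy loss, and any minimizer of the
`β → 0` limit `L_0 = CE` is a separating representation. -/
theorem stmt_12 (T : ℕ) (hT : 0 < T)
    (p : Fin T → H → Z → ℝ)
    (hp_pos : ∀ t h z, 0 < p t h z) (hp_sum : ∀ t, ∑ h, ∑ z, p t h z = 1)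
    (r₀ : IBRep T H X Z) (hsep : Separating T p r₀)
    (C : ℝ) (hC : Cx T p r₀ ≤ C) :
    Filter.Tendsto (fun β : ℝ => ⨅ r : IBRep T H X Z, (CE T p r + β * Cx T p r))
        (nhdsWithin 0 (Set.Ioi 0)) (nhds (⨅ r : IBRep T H X Z, CE T p r)) ∧
      ∀ r : IBRep T H X Z, (∀ r' : IBRep T H X Z, CE T p r ≤ CE T p r') →
        Separating T p r :=
  stmt_12_general T p hp_pos hp_sum r₀ hsep
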